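/- Let N, K : (0, R] → ℝ be differentiable with N ≥ 0, K > 0, and K'(r) = N(r)K(r)/r. Fix μ ∈ (0, 1/100) and suppose N satisfies N'(r) ≥ −(2/r)N(r)(1+N(r)). If r ∈ (0, R] with N(r) ≤ 1, then N(s) ≤ N(r)/(1−μ)⁵ for all s ∈ [(1−μ)r, r], and consequently the weighted average N̄(r) = (π/2)∫₀¹ sin(πτ) N((1−τμ)r) dτ satisfies N̄(r) ≤ N(r)/(1−μ)⁵. -/

import Mathlib

/-!
The differential inequality for `N` says exactly that `s ↦ s² N(s) / (1 + N(s))` is nondecreasing.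
Comparing its values at `s ≥ (1 - μ) r` and at `r` gives `(1 - μ)² N(s)/(1 + N(s)) ≤ N(r)/(1 + N(r))`,
which for `N(r) ≤ 1` solves to `N(s) ≤ N(r) / (2(1 - μ)² - 1) ≤ N(r) / (1 - μ)⁵`. The bound on the
average follows because `(π/2) sin(πτ)` is a probability density on `[0, 1]`.
-/

open Real Set

theorem integral_sin_pi_mul : ∫ t in (0:ℝ)..1, sin (π * t) = 2 / π := by
  rw [intervalIntegral.integral_comp_mul_left (fun x => sin x) pi_ne_zero, integral_sin]
  simp only [mul_zero, mul_one, cos_zero, cos_pi, smul_eq_mul]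
  ring

theorem pi_div_two_mul_integral_sin_mul_le {f : ℝ → ℝ} {B : ℝ}
    (hf : IntervalIntegrable f MeasureTheory.volume 0 1) (hB : ∀ t ∈ Icc (0:ℝ) 1, f t ≤ B) :
    π / 2 * ∫ t in (0:ℝ)..1, sin (π * t) * f t ≤ B := by
  have hsin : ContinuousOn (fun t => sin (π * t)) (uIcc 0 1) := by fun_prop
  have hle : ∫ t in (0:ℝ)..1, sin (π * t) * f t ≤ ∫ t in (0:ℝ)..1, sin (π * t) * B := by
    refine intervalIntegral.integral_mono_on zero_le_one (hf.continuousOn_mul hsin)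
      (by apply Continuous.intervalIntegrable; fun_prop)
      fun t ht => mul_le_mul_of_nonneg_left (hB t ht) ?_
    exact sin_nonneg_of_nonneg_of_le_pi (by nlinarith [pi_pos, ht.1]) (by nlinarith [pi_pos, ht.2])
  rw [intervalIntegral.integral_mul_const, integral_sin_pi_mul] at hle
  calc π / 2 * ∫ t in (0:ℝ)..1, sin (π * t) * f t ≤ π / 2 * (2 / π * B) := by
        gcongr
    _ = B := by field_simp

theorem one_sub_pow_five_le {μ : ℝ} (h0 : 0 ≤ μ) (h1 : μ ≤ 1 / 10) :
    (1 - μ) ^ 5 ≤ 2 * (1 - μ) ^ 2 - 1 := by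
  nlinarith [mul_nonneg h0 h0, mul_nonneg (mul_nonneg h0 h0) h0,
    mul_nonneg (mul_nonneg (mul_nonneg h0 h0) h0) h0, mul_nonneg (mul_nonneg h0 h0) (sub_nonneg.2 h1)]

theorem le_div_one_sub_pow_five {μ m n : ℝ} (hμ0 : 0 ≤ μ) (hμ1 : μ ≤ 1 / 10) (hn : 0 ≤ n)
    (hm0 : 0 ≤ m) (hm1 : m ≤ 1) (h : (1 - μ) ^ 2 * (n / (1 + n)) ≤ m / (1 + m)) :
    n ≤ m / (1 - μ) ^ 5 := by
  have hc : 0 ≤ 1 - (1 - μ) ^ 2 := by nlinarith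
  rw [le_div_iff₀ (pow_pos (by linarith) 5)]
  rw [← mul_div_assoc, div_le_div_iff₀ (by positivity) (by positivity)] at h
  nlinarith [mul_le_mul_of_nonneg_left (one_sub_pow_five_le hμ0 hμ1) hn,
    mul_nonneg (mul_nonneg hn (sub_nonneg.2 hm1)) hc]

theorem hasDerivAt_sq_mul_div_one_add {N : ℝ → ℝ} {n' s : ℝ} (hN : HasDerivAt N n' s)
    (h : 1 + N s ≠ 0) :
    HasDerivAt (fun s => s ^ 2 * N s / (1 + N s))
      ((2 * s * N s * (1 + N s) + s ^ 2 * n') / (1 + N s) ^ 2) s := by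
  refine (((hasDerivAt_pow 2 s).mul hN).div (hN.const_add 1) h).congr_deriv ?_
  simp only [Pi.mul_apply, Nat.cast_ofNat]
  ring

theorem monotoneOn_sq_mul_div_one_add {N N' : ℝ → ℝ} {D : Set ℝ} (hD : Convex ℝ D)
    (hN0 : ∀ s ∈ D, 0 ≤ N s) (hderiv : ∀ s ∈ D, HasDerivAt N (N' s) s)
    (hineq : ∀ s ∈ D, -(2 / s) * N s * (1 + N s) ≤ N' s) :
    MonotoneOn (fun s => s ^ 2 * N s / (1 + N s)) D := by
  have hφ : ∀ s ∈ D, HasDerivAt (fun s => s ^ 2 * N s / (1 + N s))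
      ((2 * s * N s * (1 + N s) + s ^ 2 * N' s) / (1 + N s) ^ 2) s := fun s hs =>
    hasDerivAt_sq_mul_div_one_add (hderiv s hs) (by linarith [hN0 s hs])
  refine monotoneOn_of_hasDerivWithinAt_nonneg hD
    (fun s hs => (hφ s hs).continuousAt.continuousWithinAt)
    (fun s hs => (hφ s (interior_subset hs)).hasDerivWithinAt) fun s hs => ?_
  have hs := interior_subset hs
  -- `s ^ 2 * (2 / s) = 2 * s` holds also at `s = 0`
  have hscale : s ^ 2 * (-(2 / s) * N s * (1 + N s)) = -(2 * s * N s * (1 + N s)) := by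
    rcases eq_or_ne s 0 with rfl | h0
    · simp
    · field_simp
  have := mul_le_mul_of_nonneg_left (hineq s hs) (sq_nonneg s)
  exact div_nonneg (by linarith) (sq_nonneg _)

theorem le_div_one_sub_pow_five_of_monotoneOn {N : ℝ → ℝ} {D : Set ℝ} {μ r s : ℝ}
    (hmono : MonotoneOn (fun s => s ^ 2 * N s / (1 + N s)) D) (hN0 : ∀ s ∈ D, 0 ≤ N s)
    (hμ0 : 0 ≤ μ) (hμ1 : μ ≤ 1 / 10) (hr0 : 0 < r) (hr : r ∈ D) (hs : s ∈ D) (hNr : N r ≤ 1)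
    (hs1 : (1 - μ) * r ≤ s) (hs2 : s ≤ r) :
    N s ≤ N r / (1 - μ) ^ 5 := by
  have hφ : s ^ 2 * (N s / (1 + N s)) ≤ r ^ 2 * (N r / (1 + N r)) := by
    simpa only [mul_div_assoc] using hmono hs hr hs2
  have hq : 0 ≤ N s / (1 + N s) := by have := hN0 s hs; positivity
  refine le_div_one_sub_pow_five hμ0 hμ1 (hN0 s hs) (hN0 r hr) hNr ?_
  calc (1 - μ) ^ 2 * (N s / (1 + N s)) = ((1 - μ) * r) ^ 2 * (N s / (1 + N s)) / r ^ 2 := by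
        field_simp
    _ ≤ s ^ 2 * (N s / (1 + N s)) / r ^ 2 := by
        gcongr
        nlinarith
    _ ≤ r ^ 2 * (N r / (1 + N r)) / r ^ 2 := by gcongr
    _ = N r / (1 + N r) := by field_simp

theorem stmt_7_general (R : ℝ) (N N' : ℝ → ℝ)
    (hN0 : ∀ r ∈ Set.Ioc (0:ℝ) R, 0 ≤ N r)
    (hderiv : ∀ r ∈ Set.Ioc (0:ℝ) R, HasDerivAt N (N' r) r)
    (hineq : ∀ r ∈ Set.Ioc (0:ℝ) R, -(2 / r) * N r * (1 + N r) ≤ N' r)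
    (μ : ℝ) (hμ : μ ∈ Set.Ioo (0:ℝ) (1/100))
    (r : ℝ) (hr : r ∈ Set.Ioc (0:ℝ) R) (hNr : N r ≤ 1) :
    (∀ s : ℝ, (1 - μ) * r ≤ s → s ≤ r → N s ≤ N r / (1 - μ) ^ 5) ∧
      (Real.pi / 2) * ∫ t in (0:ℝ)..1, Real.sin (Real.pi * t) * N ((1 - t * μ) * r)
        ≤ N r / (1 - μ) ^ 5 := by
  obtain ⟨hμ0, hμ1⟩ := hμ
  have hr0 := hr.1
  have hmem : ∀ s, (1 - μ) * r ≤ s → s ≤ r → s ∈ Ioc 0 R := fun s hs1 hs2 =>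
    ⟨lt_of_lt_of_le (mul_pos (by linarith) hr0) hs1, hs2.trans hr.2⟩
  have hmono := monotoneOn_sq_mul_div_one_add (convex_Ioc 0 R) hN0 hderiv hineq
  have hbound : ∀ s, (1 - μ) * r ≤ s → s ≤ r → N s ≤ N r / (1 - μ) ^ 5 := fun s hs1 hs2 =>
    le_div_one_sub_pow_five_of_monotoneOn hmono hN0 hμ0.le (by linarith) hr0 hr
      (hmem s hs1 hs2) hNr hs1 hs2
  have hpath : ∀ t ∈ Icc (0:ℝ) 1, (1 - μ) * r ≤ (1 - t * μ) * r ∧ (1 - t * μ) * r ≤ r :=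
    fun t ht => ⟨by nlinarith [mul_nonneg (mul_nonneg hμ0.le (sub_nonneg.2 ht.2)) hr0.le],
      by nlinarith [mul_nonneg (mul_nonneg ht.1 hμ0.le) hr0.le]⟩
  have hcont : ContinuousOn (fun t => N ((1 - t * μ) * r)) (uIcc 0 1) := by
    rw [uIcc_of_le zero_le_one]
    refine ContinuousOn.comp (t := Ioc 0 R)
      (fun s hs => (hderiv s hs).continuousAt.continuousWithinAt) (by fun_prop)
      fun t ht => hmem _ (hpath t ht).1 (hpath t ht).2
  exact ⟨hbound, pi_div_two_mul_integral_sin_mul_le hcont.intervalIntegrable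
    fun t ht => hbound _ (hpath t ht).1 (hpath t ht).2⟩

theorem stmt_7 (R : ℝ) (hR : 0 < R) (N N' K : ℝ → ℝ)
    (hN0 : ∀ r ∈ Set.Ioc (0:ℝ) R, 0 ≤ N r)
    (hKpos : ∀ r ∈ Set.Ioc (0:ℝ) R, 0 < K r)
    (hKode : ∀ r ∈ Set.Ioc (0:ℝ) R, HasDerivAt K (N r * K r / r) r)
    (hderiv : ∀ r ∈ Set.Ioc (0:ℝ) R, HasDerivAt N (N' r) r)
    (hineq : ∀ r ∈ Set.Ioc (0:ℝ) R, -(2 / r) * N r * (1 + N r) ≤ N' r)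
    (μ : ℝ) (hμ : μ ∈ Set.Ioo (0:ℝ) (1/100))
    (r : ℝ) (hr : r ∈ Set.Ioc (0:ℝ) R) (hNr : N r ≤ 1) :
    (∀ s : ℝ, (1 - μ) * r ≤ s → s ≤ r → N s ≤ N r / (1 - μ) ^ 5) ∧
      (Real.pi / 2) * ∫ t in (0:ℝ)..1, Real.sin (Real.pi * t) * N ((1 - t * μ) * r)
        ≤ N r / (1 - μ) ^ 5 :=
  stmt_7_general R N N' hN0 hderiv hineq μ hμ r hr hNr
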